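/- arXiv:2105.03415 — 2 statements merged into one kernel-verified Lean document; each statement's English description precedes it below -/
import Mathlib

section
/- For every n ≥ 1, every a : ℕ, and every b < 2^n, the n-th iterate of T satisfies T^[n](2^n * a + b) = 3^(m(b,n)) * a + T^[n](b), where m(b,n) is the number of indices k with 0 ≤ k < n such that T^[k](b) is odd. -/
def T (N : ℕ) : ℕ := if N % 2 = 0 then N / 2 else (3 * N + 1) / 2

def m (b n : ℕ) : ℕ := ((Finset.range n).filter (fun k => Odd (T^[k] b))).card

lemma m_succ (b k : ℕ) :
    m b (k + 1) = m b k + if Odd (T^[k] b) then 1 else 0 := by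
  unfold m
  rw [Finset.range_add_one, Finset.filter_insert]
  split_ifs
  · exact Finset.card_insert_of_notMem (by simp)
  · rfl

/-- Adding an even number `2 * q` does not change the parity, so `T` acts on it linearly. -/
lemma T_two_mul_add (q y : ℕ) :
    T (2 * q + y) = 3 ^ (if Odd y then 1 else 0) * q + T y := by
  have hparity : (2 * q + y) % 2 = y % 2 := by omega
  unfold T
  simp only [hparity, Nat.odd_iff]
  split_ifs <;> omega

lemma iterate_T_two_pow_mul_add (j k a b : ℕ) :
    T^[k] (2 ^ (j + k) * a + b) = 2 ^ j * 3 ^ m b k * a + T^[k] b := by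
  induction k generalizing j with
  | zero => simp [m]
  | succ k ih =>
    have hsplit : 2 ^ (j + 1) * 3 ^ m b k * a = 2 * (2 ^ j * 3 ^ m b k * a) := by ring
    rw [Function.iterate_succ_apply', Function.iterate_succ_apply', ← add_assoc,
      add_right_comm j k 1, ih, hsplit, T_two_mul_add, m_succ, pow_add]
    ring

theorem stmt1 : ∀ n ≥ 1, ∀ a : ℕ, ∀ b < 2 ^ n,
    T^[n] (2 ^ n * a + b) = 3 ^ m b n * a + T^[n] b := by
  intro n _ a b _
  simpa using iterate_T_two_pow_mul_add 0 n a b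
end

section
/- For every n ≥ 1 and b < 2^n: if T^[n](b) is even then m(b, n+1) = m(b,n) and m(b + 2^n, n+1) = m(b,n) + 1; if T^[n](b) is odd then m(b, n+1) = m(b,n) + 1 and m(b + 2^n, n+1) = m(b,n). -/
lemma m_zero (b : ℕ) : m b 0 = 0 := rfl

lemma T_add_two_mul (x c : ℕ) : T (x + 2 * c) = T x + if Odd x then 3 * c else c := by
  simp only [T, Nat.odd_iff]
  split_ifs <;> omega

lemma iterate_T_add_two_pow {n k : ℕ} (b : ℕ) (hk : k ≤ n) :
    T^[k] (b + 2 ^ n) = T^[k] b + 3 ^ m b k * 2 ^ (n - k) := by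
  induction k with
  | zero => simp [m_zero]
  | succ k ih =>
    have hpow : 2 ^ (n - k) = 2 * 2 ^ (n - (k + 1)) := by
      rw [← pow_succ']; congr 1; omega
    rw [Function.iterate_succ_apply', Function.iterate_succ_apply', ih (by omega), hpow,
      mul_left_comm, T_add_two_mul, m_succ]
    split_ifs <;> ring

lemma odd_iterate_T_add_two_pow_iff_of_lt {n k : ℕ} (b : ℕ) (hk : k < n) :
    Odd (T^[k] (b + 2 ^ n)) ↔ Odd (T^[k] b) := by
  have hshift : Even (3 ^ m b k * 2 ^ (n - k)) :=
    (Nat.even_pow' (by omega)).mpr even_two |>.mul_left _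
  rw [iterate_T_add_two_pow b hk.le, Nat.odd_add]
  exact iff_true_right hshift

lemma odd_iterate_T_add_two_pow_iff (n b : ℕ) :
    Odd (T^[n] (b + 2 ^ n)) ↔ ¬ Odd (T^[n] b) := by
  have hshift : Odd (3 ^ m b n) := Odd.pow (by decide)
  rw [iterate_T_add_two_pow b le_rfl, Nat.sub_self, pow_zero, mul_one, Nat.odd_add']
  simp [hshift]

lemma m_add_two_pow (n b : ℕ) : m (b + 2 ^ n) n = m b n := by
  unfold m
  congr 1
  exact Finset.filter_congr fun k hk =>
    odd_iterate_T_add_two_pow_iff_of_lt b (Finset.mem_range.mp hk)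

theorem stmt3 : ∀ n ≥ 1, ∀ b < 2 ^ n,
    (Even (T^[n] b) → m b (n + 1) = m b n ∧ m (b + 2 ^ n) (n + 1) = m b n + 1) ∧
    (Odd (T^[n] b) → m b (n + 1) = m b n + 1 ∧ m (b + 2 ^ n) (n + 1) = m b n) := by
  intro n _ b _
  have hflip := odd_iterate_T_add_two_pow_iff n b
  simp only [m_succ, m_add_two_pow, hflip, ← Nat.not_odd_iff_even]
  constructor <;> intro h <;> simp [h]
end
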